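/- arXiv:2406.10775 — 4 statements merged into one kernel-verified Lean document; each statement's English description precedes it below -/
import Mathlib

section
/- Given points x₁,…,x_N in a convex set S ⊆ ℝ^d and a differentiable strictly convex f : S → ℝ, the arithmetic mean μ = (1/N)∑ᵢ xᵢ is the unique minimizer over c ∈ S of (1/N)∑ᵢ D_f(xᵢ, c), where D_f is the Bregman divergence of f. -/
open RealInnerProductSpace Finset

/-!
Because `∑ᵢ xᵢ = N μ`, the terms linear in `xᵢ` collapse and
`∑ᵢ D_f(xᵢ, c) = ∑ᵢ D_f(xᵢ, μ) + N · D_f(μ, c)`. The last divergence is nonnegative by the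
tangent-line inequality for convex functions, and positive for `c ≠ μ` when `f` is strictly convex.
-/

noncomputable def bregmanDiv {E : Type*} [NormedAddCommGroup E] [InnerProductSpace ℝ E]
    (f : E → ℝ) (f' : E → E) (x y : E) : ℝ :=
  f x - f y - ⟪x - y, f' y⟫

section

variable {E : Type*} [NormedAddCommGroup E] [InnerProductSpace ℝ E]

theorem sum_bregmanDiv_eq_add {ι : Type*} [Fintype ι] (f : E → ℝ) (f' : E → E) {x : ι → E}
    {μ : E} (hμ : ∑ i, x i = (Fintype.card ι : ℝ) • μ) (c : E) :
    ∑ i, bregmanDiv f f' (x i) c =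
      ∑ i, bregmanDiv f f' (x i) μ + Fintype.card ι * bregmanDiv f f' μ c := by
  have hlin : ∀ z, ∑ i, ⟪x i - z, f' z⟫ = Fintype.card ι * ⟪μ - z, f' z⟫ := fun z => by
    rw [← sum_inner, sum_sub_distrib, hμ, sum_const, card_univ, ← Nat.cast_smul_eq_nsmul ℝ,
      ← smul_sub, real_inner_smul_left]
  simp only [bregmanDiv, sum_sub_distrib, hlin, sum_const, card_univ, nsmul_eq_mul, sub_self,
    inner_zero_left]
  ring

variable [CompleteSpace E] {S : Set E} {f : E → ℝ} {f' : E → E} {x y : E}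

theorem bregmanDiv_nonneg (hf : ConvexOn ℝ S f) (hx : x ∈ S) (hy : y ∈ S)
    (hgrad : HasGradientAt f (f' y) y) : 0 ≤ bregmanDiv f f' x y := by
  set φ : ℝ → ℝ := f ∘ AffineMap.lineMap y x
  have hφ : ConvexOn ℝ (AffineMap.lineMap y x ⁻¹' S) φ := hf.comp_affineMap _
  have hφ' : HasDerivAt φ ⟪f' y, x - y⟫ 0 := by
    simpa using hgrad.hasFDerivAt.comp_hasDerivAt_of_eq (0 : ℝ) AffineMap.hasDerivAt_lineMap
      (AffineMap.lineMap_apply_zero y x).symm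
  have hslope := hφ.le_slope_of_hasDerivAt (by simpa using hy) (by simpa using hx) zero_lt_one hφ'
  simp only [φ, slope_def_field, Function.comp_apply, AffineMap.lineMap_apply_one,
    AffineMap.lineMap_apply_zero, sub_zero, div_one] at hslope
  rw [bregmanDiv, real_inner_comm]
  linarith

theorem bregmanDiv_pos (hf : StrictConvexOn ℝ S f) (hx : x ∈ S) (hy : y ∈ S) (hxy : x ≠ y)
    (hgrad : HasGradientAt f (f' y) y) : 0 < bregmanDiv f f' x y := by
  set m := (1 / 2 : ℝ) • x + (1 / 2 : ℝ) • y
  have hm : m ∈ S := hf.1 hx hy (by norm_num) (by norm_num) (by norm_num)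
  have hfm : f m < 1 / 2 * f x + 1 / 2 * f y :=
    hf.2 hx hy hxy (by norm_num) (by norm_num) (by norm_num)
  have hDm := bregmanDiv_nonneg hf.convexOn hm hy hgrad
  have hmy : m - y = (1 / 2 : ℝ) • (x - y) := by module
  rw [bregmanDiv, hmy, real_inner_smul_left] at hDm
  rw [bregmanDiv]
  linarith

theorem sum_bregmanDiv_mean_le {ι : Type*} [Fintype ι] (hf : ConvexOn ℝ S f)
    {x : ι → E} {μ c : E}
    (hμ : ∑ i, x i = (Fintype.card ι : ℝ) • μ) (hμS : μ ∈ S) (hc : c ∈ S)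
    (hgrad : HasGradientAt f (f' c) c) :
    ∑ i, bregmanDiv f f' (x i) μ ≤ ∑ i, bregmanDiv f f' (x i) c := by
  rw [sum_bregmanDiv_eq_add f f' hμ c, le_add_iff_nonneg_right]
  exact mul_nonneg (Nat.cast_nonneg _) (bregmanDiv_nonneg hf hμS hc hgrad)

theorem eq_mean_of_sum_bregmanDiv_eq {ι : Type*} [Fintype ι] [Nonempty ι]
    (hf : StrictConvexOn ℝ S f) {x : ι → E} {μ c : E}
    (hμ : ∑ i, x i = (Fintype.card ι : ℝ) • μ) (hμS : μ ∈ S) (hc : c ∈ S)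
    (hgrad : HasGradientAt f (f' c) c)
    (heq : ∑ i, bregmanDiv f f' (x i) c = ∑ i, bregmanDiv f f' (x i) μ) : c = μ := by
  by_contra hne
  rw [sum_bregmanDiv_eq_add f f' hμ c, add_eq_left] at heq
  exact (mul_pos (by positivity) (bregmanDiv_pos hf hμS hc (Ne.symm hne) hgrad)).ne' heq

end

theorem bregman_mean_unique_minimizer_general {d N : ℕ} (hN : 0 < N)
    (S : Set (EuclideanSpace ℝ (Fin d)))
    (x : Fin N → EuclideanSpace ℝ (Fin d))
    (f : EuclideanSpace ℝ (Fin d) → ℝ)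
    (f' : EuclideanSpace ℝ (Fin d) → EuclideanSpace ℝ (Fin d))
    (hconv : StrictConvexOn ℝ S f)
    (hdiff : ∀ y ∈ S, HasGradientAt f (f' y) y)
    (μ : EuclideanSpace ℝ (Fin d)) (hμdef : μ = (N : ℝ)⁻¹ • ∑ i, x i)
    (hμS : μ ∈ S) :
    (∀ c ∈ S,
        (N : ℝ)⁻¹ * ∑ i, (f (x i) - f μ - ⟪x i - μ, f' μ⟫) ≤
          (N : ℝ)⁻¹ * ∑ i, (f (x i) - f c - ⟪x i - c, f' c⟫)) ∧
    (∀ c ∈ S,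
        (N : ℝ)⁻¹ * ∑ i, (f (x i) - f c - ⟪x i - c, f' c⟫) =
          (N : ℝ)⁻¹ * ∑ i, (f (x i) - f μ - ⟪x i - μ, f' μ⟫) → c = μ) := by
  have : NeZero N := ⟨hN.ne'⟩
  have hNR : (N : ℝ) ≠ 0 := by positivity
  have hμ : ∑ i, x i = (Fintype.card (Fin N) : ℝ) • μ := by
    rw [Fintype.card_fin, hμdef, smul_inv_smul₀ hNR]
  refine ⟨fun c hc => ?_, fun c hc heq => ?_⟩
  · exact mul_le_mul_of_nonneg_left
      (sum_bregmanDiv_mean_le hconv.convexOn hμ hμS hc (hdiff c hc)) (by positivity)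
  · exact eq_mean_of_sum_bregmanDiv_eq hconv hμ hμS hc (hdiff c hc)
      (mul_left_cancel₀ (inv_ne_zero hNR) heq)

/-- The arithmetic mean of points `x₁, …, x_N` in a convex set `S` is the unique
minimizer over `c ∈ S` of the average Bregman divergence `(1/N) ∑ᵢ D_f(xᵢ, c)`. -/
theorem bregman_mean_unique_minimizer {d N : ℕ} (hN : 0 < N)
    (S : Set (EuclideanSpace ℝ (Fin d))) (hS : Convex ℝ S)
    (x : Fin N → EuclideanSpace ℝ (Fin d)) (hx : ∀ i, x i ∈ S)
    (f : EuclideanSpace ℝ (Fin d) → ℝ)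
    (f' : EuclideanSpace ℝ (Fin d) → EuclideanSpace ℝ (Fin d))
    (hconv : StrictConvexOn ℝ S f)
    (hdiff : ∀ y ∈ S, HasGradientAt f (f' y) y)
    (μ : EuclideanSpace ℝ (Fin d)) (hμdef : μ = (N : ℝ)⁻¹ • ∑ i, x i)
    (hμS : μ ∈ S) :
    (∀ c ∈ S,
        (N : ℝ)⁻¹ * ∑ i, (f (x i) - f μ - ⟪x i - μ, f' μ⟫) ≤
          (N : ℝ)⁻¹ * ∑ i, (f (x i) - f c - ⟪x i - c, f' c⟫)) ∧
    (∀ c ∈ S,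
        (N : ℝ)⁻¹ * ∑ i, (f (x i) - f c - ⟪x i - c, f' c⟫) =
          (N : ℝ)⁻¹ * ∑ i, (f (x i) - f μ - ⟪x i - μ, f' μ⟫) → c = μ) :=
  bregman_mean_unique_minimizer_general hN S x f f' hconv hdiff μ hμdef hμS
end

section
/- Let ψ be differentiable and strictly convex with Legendre conjugate ψ*. Then for a regular exponential family density p_ψ(x;φ) = exp(⟨t(x),φ⟩ − ψ(φ))h₀(x), one has p_ψ(x;φ) = exp(−D_{ψ*}(t(x), ∇ψ(φ))) · exp(ψ*(t(x)))h₀(x), where D_{ψ*} is the Bregman divergence of ψ*. -/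
open RealInnerProductSpace

/-- Dual Bregman form of a regular exponential family: with `ψ*` the Legendre
conjugate of `ψ` (so that `ψ(φ) + ψ*(∇ψ(φ)) = ⟪φ, ∇ψ(φ)⟫` and
`∇ψ*(∇ψ(φ)) = φ`), one has
`p_ψ(x;φ) = exp(−D_{ψ*}(t(x), ∇ψ(φ))) · exp(ψ*(t(x))) h₀(x)`. -/
theorem expFamily_dual_bregman_form {α : Type*} {d : ℕ}
    (ψ ψs : EuclideanSpace ℝ (Fin d) → ℝ)
    (gψ gψs : EuclideanSpace ℝ (Fin d) → EuclideanSpace ℝ (Fin d))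
    (hψconv : StrictConvexOn ℝ Set.univ ψ)
    (hψdiff : ∀ φ, HasGradientAt ψ (gψ φ) φ)
    (hconj : ∀ φ, ψ φ + ψs (gψ φ) = ⟪φ, gψ φ⟫)
    (hinv : ∀ φ, gψs (gψ φ) = φ)
    (t : α → EuclideanSpace ℝ (Fin d)) (h₀ : α → ℝ)
    (x : α) (φ : EuclideanSpace ℝ (Fin d)) :
    Real.exp (⟪t x, φ⟫ - ψ φ) * h₀ x =
      Real.exp (-(ψs (t x) - ψs (gψ φ) - ⟪t x - gψ φ, gψs (gψ φ)⟫)) *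
        (Real.exp (ψs (t x)) * h₀ x) := by
  rw [hinv, inner_sub_left, ← mul_assoc, ← Real.exp_add]
  have h := hconj φ
  have hs : ⟪φ, gψ φ⟫ = ⟪gψ φ, φ⟫ := real_inner_comm _ _
  have key : -(ψs (t x) - ψs (gψ φ) - (⟪t x, φ⟫ - ⟪gψ φ, φ⟫)) + ψs (t x)
      = ⟪t x, φ⟫ - ψ φ := by rw [← hs]; linarith
  rw [key]
end

section
/- Let q(z) = ∑_κ q(κ) q(z|κ) be a finite mixture of densities and p(z|x) an encoder density. Then E_X[KL(p(·|X) ‖ q)] = −H(Z|X) − E_{X,Z}[𝔼_{K|Z}[log q(Z|K)]] + E_{X,Z}[KL(q(·|Z) ‖ q(·))], where q(κ|z) is the posterior component assignment, H(Z|X) is the conditional differential entropy, and q(·) is the marginal on components. -/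
open MeasureTheory Finset

/-- Decomposition of the expected KL divergence from an encoder to a finite
mixture `q(z) = ∑_κ q(κ) q(z|κ)`:
`E_X[KL(p(·|X) ‖ q)] = −H(Z|X) − E_{X,Z}[E_{K|Z}[log q(Z|K)]] + E_{X,Z}[KL(q(·|Z) ‖ q(·))]`,
where `q(κ|z) = q(κ)q(z|κ)/q(z)` is the posterior component assignment. -/
theorem expected_kl_mixture_decomposition {β : Type*} [MeasurableSpace β]
    (ν : Measure β) {n k : ℕ}
    (px : Fin n → ℝ) (hpx : ∀ x, 0 < px x) (hpxsum : ∑ x, px x = 1)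
    (p : Fin n → β → ℝ) (hp : ∀ x z, 0 < p x z)
    (hpint : ∀ x, ∫ z, p x z ∂ν = 1)
    (w : Fin k → ℝ) (hw : ∀ κ, 0 < w κ) (hwsum : ∑ κ, w κ = 1)
    (q : Fin k → β → ℝ) (hq : ∀ κ z, 0 < q κ z)
    (hqint : ∀ κ, ∫ z, q κ z ∂ν = 1)
    (hint₁ : ∀ x, Integrable
      (fun z => p x z * Real.log (p x z / ∑ κ, w κ * q κ z)) ν)
    (hint₂ : ∀ x, Integrable (fun z => p x z * Real.log (p x z)) ν)
    (hint₃ : ∀ x, Integrable (fun z => p x z *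
      (∑ κ, (w κ * q κ z / ∑ κ', w κ' * q κ' z) * Real.log (q κ z))) ν)
    (hint₄ : ∀ x, Integrable (fun z => p x z *
      (∑ κ, (w κ * q κ z / ∑ κ', w κ' * q κ' z) *
        Real.log ((w κ * q κ z / ∑ κ', w κ' * q κ' z) / w κ))) ν) :
    ∑ x, px x * ∫ z, p x z * Real.log (p x z / ∑ κ, w κ * q κ z) ∂ν =
      (∑ x, px x * ∫ z, p x z * Real.log (p x z) ∂ν) -
        (∑ x, px x * ∫ z, p x z *
          (∑ κ, (w κ * q κ z / ∑ κ', w κ' * q κ' z) * Real.log (q κ z)) ∂ν) +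
        ∑ x, px x * ∫ z, p x z *
          (∑ κ, (w κ * q κ z / ∑ κ', w κ' * q κ' z) *
            Real.log ((w κ * q κ z / ∑ κ', w κ' * q κ' z) / w κ)) ∂ν := by
  -- The mixture density is positive everywhere.
  have hk : (Finset.univ : Finset (Fin k)).Nonempty := by
    by_contra h
    rw [Finset.not_nonempty_iff_eq_empty] at h
    simp [h] at hwsum
  have hQ : ∀ z, 0 < ∑ κ, w κ * q κ z := fun z =>
    Finset.sum_pos (fun κ _ => mul_pos (hw κ) (hq κ z)) hk
  -- Pointwise identity for the integrands.
  have key : ∀ x z,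
      p x z * Real.log (p x z / ∑ κ, w κ * q κ z) =
        p x z * Real.log (p x z) -
          p x z * (∑ κ, (w κ * q κ z / ∑ κ', w κ' * q κ' z) * Real.log (q κ z)) +
          p x z * (∑ κ, (w κ * q κ z / ∑ κ', w κ' * q κ' z) *
            Real.log ((w κ * q κ z / ∑ κ', w κ' * q κ' z) / w κ)) := by
    intro x z
    set Q := ∑ κ', w κ' * q κ' z with hQdef
    have hQpos : 0 < Q := hQ z
    have hr1 : ∑ κ, w κ * q κ z / Q = 1 := by
      rw [← Finset.sum_div, ← hQdef, div_self hQpos.ne']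
    have hterm : ∀ κ, (w κ * q κ z / Q) *
        Real.log ((w κ * q κ z / Q) / w κ) =
        (w κ * q κ z / Q) * Real.log (q κ z) -
          (w κ * q κ z / Q) * Real.log Q := by
      intro κ
      have : (w κ * q κ z / Q) / w κ = q κ z / Q := by
        rw [div_div, mul_comm Q (w κ), mul_div_mul_left _ _ (hw κ).ne']
      rw [this, Real.log_div (hq κ z).ne' hQpos.ne', mul_sub]
    have hsum : ∑ κ, (w κ * q κ z / Q) *
        Real.log ((w κ * q κ z / Q) / w κ) =
        (∑ κ, (w κ * q κ z / Q) * Real.log (q κ z)) - Real.log Q := by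
      simp_rw [hterm]
      rw [Finset.sum_sub_distrib, ← Finset.sum_mul, hr1, one_mul]
    rw [hsum, Real.log_div (hp x z).ne' hQpos.ne']
    ring
  -- Rewrite each inner integral using integrability.
  have hint : ∀ x,
      (∫ z, p x z * Real.log (p x z / ∑ κ, w κ * q κ z) ∂ν) =
        (∫ z, p x z * Real.log (p x z) ∂ν) -
          (∫ z, p x z *
            (∑ κ, (w κ * q κ z / ∑ κ', w κ' * q κ' z) * Real.log (q κ z)) ∂ν) +
          ∫ z, p x z *
            (∑ κ, (w κ * q κ z / ∑ κ', w κ' * q κ' z) *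
              Real.log ((w κ * q κ z / ∑ κ', w κ' * q κ' z) / w κ)) ∂ν := by
    intro x
    have hsub : Integrable (fun z => p x z * Real.log (p x z) -
        p x z * (∑ κ, (w κ * q κ z / ∑ κ', w κ' * q κ' z) * Real.log (q κ z))) ν :=
      (hint₂ x).sub (hint₃ x)
    rw [integral_congr_ae (Filter.Eventually.of_forall (fun z => key x z)),
      integral_add hsub (hint₄ x), integral_sub (hint₂ x) (hint₃ x)]
  rw [← Finset.sum_sub_distrib, ← Finset.sum_add_distrib]
  exact Finset.sum_congr rfl fun x _ => by rw [hint x]; ring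
end

section
/- Given fixed positive weights w₁,…,w_N summing to 1 and Gaussian encoders N(μᵢ, Σᵢ), the Gaussian N(μ*, Σ*) minimizing ∑ᵢ wᵢ KL(N(μᵢ,Σᵢ) ‖ N(μ,Σ)) over μ ∈ ℝ^d and positive definite Σ has μ* = ∑ᵢ wᵢ μᵢ and Σ* = ∑ᵢ wᵢ (Σᵢ + (μᵢ − μ*)(μᵢ − μ*)ᵀ). -/
/-!
Write `μ₀ = ∑ wᵢ μᵢ` and `S₀ = ∑ wᵢ (Sᵢ + (μᵢ - μ₀)(μᵢ - μ₀)ᵀ)`. Up to terms not depending on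
`(m, C)`, `KL(N(μᵢ, Sᵢ) ‖ N(m, C))` is linear in `Sᵢ + (m - μᵢ)(m - μᵢ)ᵀ`, so the parallel-axis
identity `∑ wᵢ (m - μᵢ)(m - μᵢ)ᵀ = ∑ wᵢ (μᵢ - μ₀)(μᵢ - μ₀)ᵀ + (m - μ₀)(m - μ₀)ᵀ` gives
`∑ wᵢ KL(N(μᵢ, Sᵢ) ‖ N(m, C)) = KL(N(μ₀, S₀) ‖ N(m, C)) + ∑ wᵢ KL(N(μᵢ, Sᵢ) ‖ N(μ₀, S₀))`.
The objective is thus minimal where the first summand vanishes, since the Gaussian KL divergence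
is nonnegative: writing `S₁ = Rᵀ R`, this reduces to `d + log det M ≤ tr M` for the positive
definite `M = R S₂⁻¹ Rᵀ`, i.e. to `log λ ≤ λ - 1` on its eigenvalues.
-/

open Finset Matrix

theorem sum_mul_sub_mul_sub_eq {ι R : Type*} [Fintype ι] [CommRing R] {w : ι → R}
    (hw : ∑ i, w i = 1) (a b : ι → R) (x y : R) :
    ∑ i, w i * ((x - a i) * (y - b i)) =
      ∑ i, w i * ((a i - ∑ j, w j * a j) * (b i - ∑ j, w j * b j)) +
        (x - ∑ j, w j * a j) * (y - ∑ j, w j * b j) := by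
  set A := ∑ j, w j * a j
  set B := ∑ j, w j * b j
  have hterm : ∀ i, w i * ((x - a i) * (y - b i)) = w i * ((a i - A) * (b i - B)) +
      w i * (x * y - A * B) + (B - y) * (w i * a i) + (A - x) * (w i * b i) := fun i => by ring
  rw [sum_congr rfl fun i _ => hterm i, sum_add_distrib, sum_add_distrib, sum_add_distrib,
    ← sum_mul, ← mul_sum, ← mul_sum, hw]
  ring

namespace Matrix

theorem sum_smul_vecMulVec_sub {ι n R : Type*} [Fintype ι] [CommRing R] {w : ι → R}
    (hw : ∑ i, w i = 1) (a : ι → n → R) (x : n → R) :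
    ∑ i, w i • vecMulVec (x - a i) (x - a i) =
      ∑ i, w i • vecMulVec (a i - ∑ j, w j • a j) (a i - ∑ j, w j • a j) +
        vecMulVec (x - ∑ j, w j • a j) (x - ∑ j, w j • a j) := by
  ext k l
  simpa [vecMulVec_apply, Matrix.sum_apply, Finset.sum_apply] using
    sum_mul_sub_mul_sub_eq hw (fun i => a i k) (fun i => a i l) (x k) (x l)

variable {n : Type*} [Fintype n] [DecidableEq n]

theorem PosDef.card_add_log_det_le_trace {M : Matrix n n ℝ} (hM : M.PosDef) :
    (Fintype.card n : ℝ) + Real.log M.det ≤ M.trace := by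
  have hpos := hM.eigenvalues_pos
  rw [hM.isHermitian.trace_eq_sum_eigenvalues, hM.isHermitian.det_eq_prod_eigenvalues]
  simp only [RCLike.ofReal_real_eq_id, id]
  rw [Real.log_prod fun i _ => (hpos i).ne', Fintype.card_eq_sum_ones, Nat.cast_sum, Nat.cast_one,
    ← sum_add_distrib]
  exact sum_le_sum fun i _ => by linarith [Real.log_le_sub_one_of_pos (hpos i)]

open scoped MatrixOrder in
theorem PosDef.card_add_log_det_div_le_trace_inv_mul {A B : Matrix n n ℝ} (hA : A.PosDef)
    (hB : B.PosDef) : (Fintype.card n : ℝ) + Real.log (B.det / A.det) ≤ (A⁻¹ * B).trace := by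
  obtain ⟨R, hR, rfl⟩ := CStarAlgebra.isStrictlyPositive_iff_eq_star_mul_self.mp
    hB.isStrictlyPositive
  have hM : (R * A⁻¹ * star R).PosDef := (IsUnit.posDef_star_right_conjugate_iff hR).mpr hA.inv
  have htrace : (A⁻¹ * (star R * R)).trace = (R * A⁻¹ * star R).trace := by
    rw [← Matrix.mul_assoc, trace_mul_comm, Matrix.mul_assoc]
  have hdet : (star R * R).det / A.det = (R * A⁻¹ * star R).det := by
    rw [det_mul, det_mul, det_mul, det_nonsing_inv, Ring.inverse_eq_inv']
    ring
  rw [htrace, hdet]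
  exact hM.card_add_log_det_le_trace

end Matrix

section GaussianKL

variable {n : Type*} [Fintype n] [DecidableEq n]

/-- `KL(N(m₁, S₁) ‖ N(m₂, S₂))` in closed form. -/
noncomputable def gaussianKL (m₁ : n → ℝ) (S₁ : Matrix n n ℝ) (m₂ : n → ℝ)
    (S₂ : Matrix n n ℝ) : ℝ :=
  1 / 2 * ((S₂⁻¹ * S₁).trace + (m₂ - m₁) ⬝ᵥ S₂⁻¹ *ᵥ (m₂ - m₁) - Fintype.card n +
    Real.log (S₂.det / S₁.det))

theorem gaussianKL_nonneg {S₁ S₂ : Matrix n n ℝ} (hS₁ : S₁.PosDef) (hS₂ : S₂.PosDef)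
    (m₁ m₂ : n → ℝ) : 0 ≤ gaussianKL m₁ S₁ m₂ S₂ := by
  have htrace := hS₂.card_add_log_det_div_le_trace_inv_mul hS₁
  have hquad : 0 ≤ (m₂ - m₁) ⬝ᵥ S₂⁻¹ *ᵥ (m₂ - m₁) := by
    simpa using hS₂.inv.posSemidef.dotProduct_mulVec_nonneg (m₂ - m₁)
  have hlog : Real.log (S₂.det / S₁.det) = -Real.log (S₁.det / S₂.det) := by
    rw [← Real.log_inv, inv_div]
  rw [gaussianKL, hlog]
  linarith

theorem gaussianKL_eq_trace_inv_mul_add_vecMulVec {S₁ S₂ : Matrix n n ℝ} (hS₁ : S₁.det ≠ 0)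
    (hS₂ : S₂.det ≠ 0) (m₁ m₂ : n → ℝ) :
    gaussianKL m₁ S₁ m₂ S₂ = 1 / 2 * ((S₂⁻¹ * (S₁ + vecMulVec (m₂ - m₁) (m₂ - m₁))).trace -
      Fintype.card n + Real.log S₂.det - Real.log S₁.det) := by
  rw [gaussianKL, Real.log_div hS₂ hS₁, Matrix.mul_add, trace_add, mul_vecMulVec,
    trace_vecMulVec, dotProduct_comm]
  ring

variable {ι : Type*} [Fintype ι] {w : ι → ℝ} (hw : ∑ i, w i = 1) (μ : ι → n → ℝ)
  {S : ι → Matrix n n ℝ} (hS : ∀ i, (S i).det ≠ 0) {μ₀ : n → ℝ} (hμ₀ : μ₀ = ∑ i, w i • μ i)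
  {S₀ : Matrix n n ℝ} (hS₀ : S₀ = ∑ i, w i • (S i + vecMulVec (μ i - μ₀) (μ i - μ₀)))
include hw hS hμ₀ hS₀

theorem sum_mul_gaussianKL_eq (m : n → ℝ) {C : Matrix n n ℝ} (hC : C.det ≠ 0) :
    ∑ i, w i * gaussianKL (μ i) (S i) m C =
      1 / 2 * ((C⁻¹ * (S₀ + vecMulVec (m - μ₀) (m - μ₀))).trace - Fintype.card n +
        Real.log C.det - ∑ i, w i * Real.log (S i).det) := by
  have hsecond : ∑ i, w i • (S i + vecMulVec (m - μ i) (m - μ i)) =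
      S₀ + vecMulVec (m - μ₀) (m - μ₀) := by
    rw [hS₀, hμ₀]
    simp only [smul_add, sum_add_distrib, sum_smul_vecMulVec_sub hw, add_assoc]
  simp only [gaussianKL_eq_trace_inv_mul_add_vecMulVec (hS _) hC]
  rw [← hsecond, Matrix.mul_sum, trace_sum]
  simp only [Matrix.mul_smul, trace_smul, smul_eq_mul, mul_left_comm (w _) (1 / 2 : ℝ),
    ← mul_sum, mul_sub, mul_add, sum_sub_distrib, sum_add_distrib, ← sum_mul, hw]
  ring

theorem sum_mul_gaussianKL_eq_gaussianKL_add (hdet₀ : IsUnit S₀.det) (m : n → ℝ)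
    {C : Matrix n n ℝ} (hC : C.det ≠ 0) :
    ∑ i, w i * gaussianKL (μ i) (S i) m C =
      gaussianKL μ₀ S₀ m C + ∑ i, w i * gaussianKL (μ i) (S i) μ₀ S₀ := by
  rw [sum_mul_gaussianKL_eq hw μ hS hμ₀ hS₀ m hC,
    sum_mul_gaussianKL_eq hw μ hS hμ₀ hS₀ μ₀ hdet₀.ne_zero,
    gaussianKL_eq_trace_inv_mul_add_vecMulVec hdet₀.ne_zero hC, sub_self, vecMulVec_zero, add_zero,
    nonsing_inv_mul _ hdet₀, trace_one]
  ring

end GaussianKL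

/-- The Gaussian `N(μ*, Σ*)` with `μ* = ∑ᵢ wᵢ μᵢ` and
`Σ* = ∑ᵢ wᵢ (Σᵢ + (μᵢ − μ*)(μᵢ − μ*)ᵀ)` minimizes
`∑ᵢ wᵢ KL(N(μᵢ,Σᵢ) ‖ N(μ,Σ))` over means `μ` and positive definite covariances
`Σ` (closed-form codebook/centroid update of Davis & Dhillon 2006), where the KL
divergence between Gaussians is given by its standard closed form. -/
theorem gaussian_kl_centroid {d N : ℕ} (hN : 0 < N)
    (w : Fin N → ℝ) (hw : ∀ i, 0 < w i) (hwsum : ∑ i, w i = 1)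
    (μ : Fin N → (Fin d → ℝ)) (S : Fin N → Matrix (Fin d) (Fin d) ℝ)
    (hS : ∀ i, (S i).PosDef)
    (klG : (Fin d → ℝ) → Matrix (Fin d) (Fin d) ℝ →
      (Fin d → ℝ) → Matrix (Fin d) (Fin d) ℝ → ℝ)
    (hklG : ∀ m₁ S₁ m₂ S₂, klG m₁ S₁ m₂ S₂ =
      (1 / 2) * ((S₂⁻¹ * S₁).trace + (m₂ - m₁) ⬝ᵥ S₂⁻¹.mulVec (m₂ - m₁) -
        (d : ℝ) + Real.log (S₂.det / S₁.det)))
    (μs : Fin d → ℝ) (hμs : μs = ∑ i, w i • μ i)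
    (Ss : Matrix (Fin d) (Fin d) ℝ)
    (hSs : Ss = ∑ i, w i • (S i + vecMulVec (μ i - μs) (μ i - μs))) :
    ∀ (m : Fin d → ℝ) (C : Matrix (Fin d) (Fin d) ℝ), C.PosDef →
      ∑ i, w i * klG (μ i) (S i) μs Ss ≤ ∑ i, w i * klG (μ i) (S i) m C := by
  intro m C hC
  have hkl : klG = gaussianKL := by
    funext m₁ S₁ m₂ S₂
    rw [hklG, gaussianKL, Fintype.card_fin]
  have hSsPD : Ss.PosDef := hSs ▸ posDef_sum ⟨⟨0, hN⟩, mem_univ _⟩ fun i _ =>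
    ((hS i).add_posSemidef (posSemidef_vecMulVec_self_star _)).smul (hw i)
  have hdet : ∀ i, (S i).det ≠ 0 := fun i => (hS i).det_pos.ne'
  rw [hkl, sum_mul_gaussianKL_eq_gaussianKL_add hwsum μ hdet hμs hSs (isUnit_iff_ne_zero.mpr
    hSsPD.det_pos.ne') m hC.det_pos.ne']
  linarith [gaussianKL_nonneg hSsPD hC μs m]
end
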